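/- Lemma 31 (arrow deletions and minimal I-MAPs; content of the paper's lemma on Chickering sequences): Let C be a set of CI relations on [p], let H' be a DAG on [p] all of whose d-separation statements belong to C (CI(H') ⊆ C), and let H be the DAG obtained from H' by adding a single arrow x → y. Then for every linear extension π of H, the arrow x → y is not an arrow of the minimal I-MAP G_π with respect to C. -/

import Mathlib

open scoped Classical

namespace GSP

/-- A DAG on the node set `Fin p`, given by its finite set of arrows,
which must form an acyclic relation. -/
structure DAG (p : ℕ) where
  arrows : Finset (Fin p × Fin p)
  acyclic : ∀ i : Fin p, ¬ Relation.TransGen (fun a b => (a, b) ∈ arrows) i i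

variable {p : ℕ}

namespace DAG

/-- `a → b` is an arrow of `G`. -/
def Arrow (G : DAG p) (a b : Fin p) : Prop := (a, b) ∈ G.arrows

/-- The number of arrows of `G`, denoted `|G|`. -/
def numArrows (G : DAG p) : ℕ := G.arrows.card

/-- The set of parents of a node `j` in `G`. -/
noncomputable def parents (G : DAG p) (j : Fin p) : Finset (Fin p) :=
  Finset.univ.filter fun i => G.Arrow i j

/-- Adjacency: `a` and `b` are joined by an arrow in some direction. -/
def Adj (G : DAG p) (a b : Fin p) : Prop := G.Arrow a b ∨ G.Arrow b a

/-- `b` is a collider between `a` and `c`: both arrows point into `b`. -/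
def Collider (G : DAG p) (a b c : Fin p) : Prop := G.Arrow a b ∧ G.Arrow c b

/-- `d` is a (reflexive) descendant of `a` in `G`. -/
def Desc (G : DAG p) (a d : Fin p) : Prop := Relation.ReflTransGen G.Arrow a d

/-- The list of nodes `l` is a d-connecting walk given `S`: consecutive nodes
are adjacent, every internal collider lies in `S` or has a descendant in `S`,
and no internal non-collider lies in `S`. -/
def DConnWalk (G : DAG p) (S : Finset (Fin p)) (l : List (Fin p)) : Prop :=
  l.Chain' G.Adj ∧
  ∀ (m : ℕ) (_ : 1 ≤ m) (h2 : m + 1 < l.length),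
    (G.Collider (l.get ⟨m - 1, by omega⟩) (l.get ⟨m, by omega⟩) (l.get ⟨m + 1, h2⟩) →
      ∃ d ∈ S, G.Desc (l.get ⟨m, by omega⟩) d) ∧
    (¬ G.Collider (l.get ⟨m - 1, by omega⟩) (l.get ⟨m, by omega⟩) (l.get ⟨m + 1, h2⟩) →
      l.get ⟨m, by omega⟩ ∉ S)

/-- `i` and `j` are d-connected given `S` in `G`. -/
def DConn (G : DAG p) (i j : Fin p) (S : Finset (Fin p)) : Prop :=
  ∃ l : List (Fin p), l.head? = some i ∧ l.getLast? = some j ∧ G.DConnWalk S l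

/-- `i` and `j` are d-separated given `S` in `G`. -/
def DSep (G : DAG p) (i j : Fin p) (S : Finset (Fin p)) : Prop := ¬ G.DConn i j S

end DAG

/-- A conditional independence (CI) relation `i ⊥ j | S` on `[p]`. -/
abbrev CIRel (p : ℕ) := Fin p × Fin p × Finset (Fin p)

/-- The set of CI relations encoded by the d-separations of `G`. -/
def CIof (G : DAG p) : Set (CIRel p) :=
  {t | t.1 ≠ t.2.1 ∧ t.1 ∉ t.2.2 ∧ t.2.1 ∉ t.2.2 ∧ G.DSep t.1 t.2.1 t.2.2}

/-- The symmetric closure of a set of CI relations. -/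
def symClosure (C : Set (CIRel p)) : Set (CIRel p) :=
  {t | t ∈ C ∨ (t.2.1, t.1, t.2.2) ∈ C}

/-- Symmetry of a set of CI relations. -/
def SymmetricCI (C : Set (CIRel p)) : Prop :=
  ∀ i j S, (i, j, S) ∈ C → (j, i, S) ∈ C

/-- A semigraphoid: symmetric and satisfying (SG2). -/
def Semigraphoid (C : Set (CIRel p)) : Prop :=
  SymmetricCI C ∧
  ∀ i j k S, (i, j, S) ∈ C → (i, k, insert j S) ∈ C →
    (i, k, S) ∈ C ∧ (i, j, insert k S) ∈ C

/-- A graphoid: a semigraphoid additionally satisfying intersection (INT). -/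
def Graphoid (C : Set (CIRel p)) : Prop :=
  Semigraphoid C ∧
  ∀ i j k S, (i, j, insert k S) ∈ C → (i, k, insert j S) ∈ C →
    (i, j, S) ∈ C ∧ (i, k, S) ∈ C

/-- Build a DAG from a relation compatible with a numeric ordering. -/
noncomputable def mkDAG (R : Fin p → Fin p → Prop) (f : Fin p → ℕ)
    (hf : ∀ a b, R a b → f a < f b) : DAG p where
  arrows := Finset.univ.filter fun e : Fin p × Fin p => R e.1 e.2
  acyclic := by
    intro i hi
    have key : ∀ a b : Fin p,
        Relation.TransGen (fun a b : Fin p =>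
          (a, b) ∈ Finset.univ.filter fun e : Fin p × Fin p => R e.1 e.2) a b →
        f a < f b := by
      intro a b h
      induction h with
      | single h => exact hf _ _ (by simpa using h)
      | tail _ h ih => exact lt_trans ih (hf _ _ (by simpa using h))
    exact lt_irrefl _ (key i i hi)

/-- The conditioning set `{π_1, …, π_j} \ {π_i, π_j}` (where `b = π_j` is the
later node and `a = π_i` the earlier one) used in the definition of minimal
I-MAPs. -/
noncomputable def condSet (π : Equiv.Perm (Fin p)) (a b : Fin p) : Finset (Fin p) :=
  ((Finset.univ.filter fun k : Fin p => π.symm k ≤ π.symm b).erase a).erase b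

/-- The minimal I-MAP `G_π` of a set `C` of CI relations with respect to the
permutation (ordering) `π`: there is an arrow `π_i → π_j` for positions `i < j`
iff `π_i ⊥ π_j | {π_1, …, π_j} \ {π_i, π_j}` is not in `C`. -/
noncomputable def minimalIMAP (C : Set (CIRel p)) (π : Equiv.Perm (Fin p)) : DAG p :=
  mkDAG (fun a b => π.symm a < π.symm b ∧ (a, b, condSet π a b) ∉ C)
    (fun a => (π.symm a : ℕ)) (fun a b h => by exact_mod_cast h.1)

/-- Markov equivalence of DAGs: equal sets of d-separation statements. -/
def MarkovEquiv (G H : DAG p) : Prop := CIof G = CIof H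

/-- `H` is an independence map of `G`, written `G ≤ H`: `CI(H) ⊆ CI(G)`. -/
def IMapLE (G H : DAG p) : Prop := CIof H ⊆ CIof G

/-- `π` is a linear extension of `G`: every arrow goes from an earlier to a
later element of `π`. -/
def IsLinExt (G : DAG p) (π : Equiv.Perm (Fin p)) : Prop :=
  ∀ a b, G.Arrow a b → π.symm a < π.symm b

/-- `a → b` is a covered arrow of `G`: `pa(a) = pa(b) \ {a}`. -/
def DAG.Covered (G : DAG p) (a b : Fin p) : Prop :=
  G.Arrow a b ∧ G.parents a = (G.parents b).erase a

/-- The minimal I-MAPs `G_σ` and `G_ρ` are connected by a covered arrow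
reversal: `ρ` is a linear extension of the DAG obtained from `G_σ` by
reversing one covered arrow of `G_σ`. -/
def CoveredReversalStep (C : Set (CIRel p)) (σ ρ : Equiv.Perm (Fin p)) : Prop :=
  ∃ a b : Fin p, (minimalIMAP C σ).Covered a b ∧
    ρ.symm b < ρ.symm a ∧
    ∀ x y : Fin p, (minimalIMAP C σ).Arrow x y → (x, y) ≠ (a, b) →
      ρ.symm x < ρ.symm y

/-- A weakly decreasing sequence of covered arrow reversals: a sequence of
minimal I-MAPs in which consecutive members are connected by covered arrow
reversals and the number of arrows never increases. -/
def WeaklyDecreasingSeq (C : Set (CIRel p)) (s : List (Equiv.Perm (Fin p))) : Prop :=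
  s.Chain' fun σ ρ => CoveredReversalStep C σ ρ ∧
    (minimalIMAP C ρ).numArrows ≤ (minimalIMAP C σ).numArrows

/-- Some weakly decreasing sequence of covered arrow reversals starting at
`G_π` reaches a minimal I-MAP with strictly fewer arrows. -/
def EscapesByCoveredReversals (C : Set (CIRel p)) (π : Equiv.Perm (Fin p)) : Prop :=
  ∃ (s : List (Equiv.Perm (Fin p))) (τ : Equiv.Perm (Fin p)),
    s.head? = some π ∧ s.getLast? = some τ ∧ WeaklyDecreasingSeq C s ∧
    (minimalIMAP C τ).numArrows < (minimalIMAP C π).numArrows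

/-- The TSP assumption of `C` with respect to `G`. -/
def TSP (C : Set (CIRel p)) (G : DAG p) : Prop :=
  CIof G ⊆ C ∧
  ∀ π : Equiv.Perm (Fin p), ¬ EscapesByCoveredReversals C π →
    MarkovEquiv (minimalIMAP C π) G

/-- The SMR assumption of `C` with respect to `G`. -/
def SMR (C : Set (CIRel p)) (G : DAG p) : Prop :=
  CIof G ⊆ C ∧
  ∀ H : DAG p, CIof H ⊆ C → ¬ MarkovEquiv H G → G.numArrows < H.numArrows

end GSP

/-! A minimal I-MAP has the arrow `x → y` only if `x ⊥ y | condSet π x y` fails in `C`. But `π`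
is also a linear extension of `H'`, in which `x → y` is missing, and in a DAG every node is
d-separated from each earlier non-parent given all its other predecessors in a linear
extension; so that relation lies in `CI(H') ⊆ C`. -/

namespace GSP

variable {p : ℕ}

theorem mem_condSet {π : Equiv.Perm (Fin p)} {a b k : Fin p} :
    k ∈ condSet π a b ↔ k ≠ b ∧ k ≠ a ∧ π.symm k ≤ π.symm b := by
  simp [condSet]

theorem minimalIMAP_arrow_iff {C : Set (CIRel p)} {π : Equiv.Perm (Fin p)} {a b : Fin p} :
    (minimalIMAP C π).Arrow a b ↔ π.symm a < π.symm b ∧ (a, b, condSet π a b) ∉ C := by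
  simp [minimalIMAP, mkDAG, DAG.Arrow]

theorem DAG.DConnWalk.adj {G : DAG p} {S : Finset (Fin p)} {l : List (Fin p)}
    (hw : G.DConnWalk S l) (i : ℕ) (hi : i + 1 < l.length) : G.Adj l[i] l[i + 1] :=
  List.isChain_iff_getElem.mp hw.1 i hi

namespace IsLinExt

variable {G : DAG p} {π : Equiv.Perm (Fin p)}

theorem mono {H : DAG p} (hGH : G.arrows ⊆ H.arrows) (hH : IsLinExt H π) : IsLinExt G π :=
  fun a b hab => hH a b (hGH hab)

theorem le_of_desc (hG : IsLinExt G π) {a d : Fin p} (h : G.Desc a d) :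
    π.symm a ≤ π.symm d := by
  induction h with
  | refl => exact le_rfl
  | tail _ hbc ih => exact ih.trans (hG _ _ hbc).le

theorem arrow_of_adj (hG : IsLinExt G π) {a b : Fin p} (hab : G.Adj a b)
    (hle : π.symm a ≤ π.symm b) : G.Arrow a b :=
  hab.resolve_right fun hba => (hG b a hba).not_ge hle

/-- The `π`-latest node of a d-connecting walk is an endpoint or a collider, and a collider
has a descendant in `S`. -/
theorem le_of_mem_dConnWalk (hG : IsLinExt G π) {S : Finset (Fin p)} {l : List (Fin p)}
    (hw : G.DConnWalk S l) {n : Fin p} (hS : ∀ s ∈ S, π.symm s ≤ n)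
    (hhead : ∀ a ∈ l.head?, π.symm a ≤ n) (hlast : ∀ b ∈ l.getLast?, π.symm b ≤ n) :
    ∀ v ∈ l, π.symm v ≤ n := by
  intro v hv
  obtain ⟨j, hj, rfl⟩ := List.mem_iff_getElem.1 hv
  obtain ⟨⟨i, hi⟩, -, hmax⟩ := Finset.exists_max_image Finset.univ
    (fun i : Fin l.length => π.symm l[i]) ⟨⟨j, hj⟩, Finset.mem_univ _⟩
  replace hmax : ∀ (k : ℕ) (hk : k < l.length), π.symm l[k] ≤ π.symm l[i] :=
    fun k hk => hmax ⟨k, hk⟩ (Finset.mem_univ _)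
  refine (hmax j hj).trans ?_
  rcases Nat.eq_zero_or_pos i with rfl | hi0
  · exact hhead _ (by simp [List.head?_eq_getElem?])
  by_cases hil : i + 1 = l.length
  · exact hlast _ (by simp [List.getLast?_eq_getElem?, ← hil])
  have hinto : ∀ (k : ℕ) (hk : k < l.length), G.Adj l[k] l[i] → G.Arrow l[k] l[i] :=
    fun k hk hadj => hG.arrow_of_adj hadj (hmax k hk)
  have hcol : G.Collider l[i - 1] l[i] l[i + 1] := by
    refine ⟨hinto _ _ ?_, hinto _ _ (hw.adj i (by omega)).symm⟩
    simpa [Nat.sub_add_cancel hi0] using hw.adj (i - 1) (by omega)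
  obtain ⟨d, hdS, hd⟩ := (hw.2 i hi0 (by omega)).1 hcol
  exact (hG.le_of_desc hd).trans (hS d hdS)

/-- The last edge of a d-connecting walk from `x` to `y` given `condSet π x y` stays below `y`,
so it is an arrow `v → y` with `v ≠ x`; then `v` is a non-collider lying in the conditioning set. -/
theorem dSep_condSet (hG : IsLinExt G π) {x y : Fin p} (hlt : π.symm x < π.symm y)
    (hxy : ¬ G.Arrow x y) : G.DSep x y (condSet π x y) := by
  rintro ⟨l, hhead, hlast, hw⟩
  have hbound : ∀ v ∈ l, π.symm v ≤ π.symm y := hG.le_of_mem_dConnWalk hw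
    (fun s hs => (mem_condSet.1 hs).2.2)
    (fun a ha => by rw [hhead, Option.mem_some_iff] at ha; exact ha ▸ hlt.le)
    (fun b hb => by rw [hlast, Option.mem_some_iff] at hb; exact hb ▸ le_rfl)
  have hx : ∀ h : 0 < l.length, l[0] = x := fun h => by
    simpa [List.head?_eq_getElem?, h] using hhead
  obtain ⟨k, hk⟩ : ∃ k, l.length = k + 2 := by
    match l with
    | [] => simp at hhead
    | [_] => simp_all
    | _ :: _ :: t => exact ⟨t.length, rfl⟩
  have hy : l[k + 1] = y := by
    simpa [List.getLast?_eq_getElem?, hk] using hlast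
  have hvy : G.Arrow l[k] y := by
    have hadj := hw.adj k (by omega)
    rw [hy] at hadj
    exact hG.arrow_of_adj hadj (hbound _ (List.getElem_mem _))
  have hvx : l[k] ≠ x := fun h => hxy (h ▸ hvy)
  have hk1 : 1 ≤ k := Nat.one_le_iff_ne_zero.2 fun h => hvx (by subst h; exact hx _)
  have hvS : l[k] ∈ condSet π x y :=
    mem_condSet.2 ⟨fun h => (hG _ _ hvy).ne (h ▸ rfl), hvx, (hG _ _ hvy).le⟩
  refine (hw.2 k hk1 (by omega)).2 (fun hcol => ?_) hvS
  exact (hG _ _ hvy).not_gt (hG _ _ (hy ▸ hcol.2))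

end IsLinExt

/-- content of Lemma 31: let `C` be a set of CI relations,
`H'` a DAG with `CI(H') ⊆ C`, and let `H` be obtained from `H'` by adding a
single arrow `x → y`. Then for every linear extension `π` of `H`, the arrow
`x → y` is not an arrow of the minimal I-MAP `G_π` w.r.t. `C`. -/
theorem added_arrow_not_in_minimalIMAP
    (p : ℕ) (C : Set (CIRel p)) (H' H : DAG p)
    (hH'C : CIof H' ⊆ C) (x y : Fin p)
    (hxy : (x, y) ∉ H'.arrows)
    (hH : H.arrows = insert (x, y) H'.arrows)
    (π : Equiv.Perm (Fin p)) (hlin : IsLinExt H π) :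
    ¬ (minimalIMAP C π).Arrow x y := by
  rw [minimalIMAP_arrow_iff]
  rintro ⟨hlt, hC⟩
  have hH' : IsLinExt H' π := hlin.mono (hH ▸ Finset.subset_insert _ _)
  exact hC (hH'C ⟨fun h => hlt.ne (congrArg _ h), fun hx => (mem_condSet.1 hx).2.1 rfl,
    fun hy => (mem_condSet.1 hy).1 rfl, hH'.dSep_condSet hlt hxy⟩)

end GSP
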